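/- Let r > 1, N ≥ 2, and 0 ≤ d < 1/2. Define γ(d) = (r(1-d)+d)/((1-d)+rd) and ρ(r) = (1 - γ)/(1 - γ^N). Then γ(d) > 1 and ρ is strictly decreasing as a function of r on (1,∞). -/

import Mathlib

/-!
The map `r ↦ γ(r)` is a Möbius transformation with `γ(1) = 1` whose determinant is
`(1 - d)² - d² = 1 - 2d > 0`, so it is strictly increasing for `r ≥ 0`; in particular `γ(r) > 1`
for `r > 1`. For `γ ≠ 1` the quotient `(1 - γ) / (1 - γᴺ)` is the reciprocal of the geometric
sum `1 + γ + ⋯ + γᴺ⁻¹`, which is strictly increasing in `γ ≥ 0` once `N ≥ 2`.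
-/

open Finset Set

lemma one_sub_div_one_sub_pow_eq_inv_geom_sum {K : Type*} [Field K] {x : K} (hx : x ≠ 1)
    (n : ℕ) : (1 - x) / (1 - x ^ n) = (∑ i ∈ range n, x ^ i)⁻¹ := by
  rw [geom_sum_eq hx, inv_div, ← neg_div_neg_eq, neg_sub, neg_sub]

lemma strictMonoOn_geom_sum {R : Type*} [Semiring R] [PartialOrder R] [IsStrictOrderedRing R]
    {n : ℕ} (hn : 2 ≤ n) : StrictMonoOn (fun x : R ↦ ∑ i ∈ range n, x ^ i) (Ici 0) := by
  intro x hx y _ hxy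
  refine sum_lt_sum (fun i _ ↦ pow_le_pow_left₀ hx hxy.le i) ⟨1, mem_range.2 hn, ?_⟩
  simpa using hxy

noncomputable def fitnessRatio (d r : ℝ) : ℝ := (r * (1 - d) + d) / ((1 - d) + r * d)

lemma fitnessRatio_one (d : ℝ) : fitnessRatio d 1 = 1 := by
  simp [fitnessRatio]

lemma fitnessRatio_strictMonoOn {d : ℝ} (hd0 : 0 ≤ d) (hd : d < 1 / 2) :
    StrictMonoOn (fitnessRatio d) (Ici 0) := by
  intro a ha b hb hab
  rw [Set.mem_Ici] at ha hb
  have hden : ∀ r : ℝ, 0 ≤ r → 0 < (1 - d) + r * d := fun r hr ↦ by nlinarith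
  rw [fitnessRatio, fitnessRatio, div_lt_div_iff₀ (hden a ha) (hden b hb)]
  -- the cross difference is `(b - a) * (1 - 2d)`
  nlinarith [mul_pos (sub_pos.2 hab) (by linarith : (0 : ℝ) < 1 - 2 * d)]

/-- For `N ≥ 2` and `0 ≤ d < 1/2`, with
`γ(r) = (r(1-d)+d)/((1-d)+rd)` and `ρ(r) = (1-γ)/(1-γ^N)`, we have `γ(r) > 1`
for all `r > 1`, and `ρ` is strictly decreasing in `r` on `(1,∞)`. -/
theorem stmt_3 (N : ℕ) (hN : 2 ≤ N) (d : ℝ) (hd0 : 0 ≤ d) (hd : d < 1 / 2)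
    (γ : ℝ → ℝ) (hγ : ∀ r, γ r = (r * (1 - d) + d) / ((1 - d) + r * d))
    (ρ : ℝ → ℝ) (hρ : ∀ r, ρ r = (1 - γ r) / (1 - γ r ^ N)) :
    (∀ r : ℝ, 1 < r → 1 < γ r) ∧ StrictAntiOn ρ (Set.Ioi (1 : ℝ)) := by
  obtain rfl : γ = fitnessRatio d := funext hγ
  have hγ_mono : StrictMonoOn (fitnessRatio d) (Ioi 1) :=
    (fitnessRatio_strictMonoOn hd0 hd).mono fun r hr ↦ Set.mem_Ici.2 (zero_lt_one.trans hr).le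
  have hγ_gt : ∀ r : ℝ, 1 < r → 1 < fitnessRatio d r := fun r hr ↦
    fitnessRatio_one d ▸ fitnessRatio_strictMonoOn hd0 hd (Set.mem_Ici.2 zero_le_one)
      (Set.mem_Ici.2 (zero_le_one.trans hr.le)) hr
  refine ⟨hγ_gt, ?_⟩
  have hρ_eq : EqOn ρ ((fun s ↦ s⁻¹) ∘ (fun x ↦ ∑ i ∈ range N, x ^ i) ∘ fitnessRatio d) (Ioi 1) :=
    fun r hr ↦ by
      rw [hρ, Function.comp_apply, Function.comp_apply,
        one_sub_div_one_sub_pow_eq_inv_geom_sum (hγ_gt r hr).ne']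
  refine StrictAntiOn.congr ?_ hρ_eq.symm
  exact strictAntiOn_inv_pos.comp_strictMonoOn
    ((strictMonoOn_geom_sum hN).comp hγ_mono fun r hr ↦ (zero_lt_one.trans (hγ_gt r hr)).le)
    fun r hr ↦ geom_sum_pos (zero_lt_one.trans (hγ_gt r hr)).le (by omega)
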